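/- Let V' be a real vector space with nondegenerate symmetric bilinear form, let e₋, e₊ be null vectors with ⟨e₋,e₊⟩ = 1, and let x, y ∈ V' be orthogonal to both e₋ and e₊. Then the commutator of the skew-adjoint endomorphisms ι(e₋♭∧x♭) and ι(e₊♭∧y♭) equals ι(⟨x,y⟩·e₋♭∧e₊♭ + x♭∧y♭). -/
import Mathlib


/-- The 2-form `a♭ ∧ b♭` on `V`, encoded as an (alternating) bilinear form. -/
noncomputable def wedge2 {V : Type*} [AddCommGroup V] [Module ℝ V]
    (g : LinearMap.BilinForm ℝ V) (a b : V) : V →ₗ[ℝ] V →ₗ[ℝ] ℝ :=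
  (g a).smulRight (g b) - (g b).smulRight (g a)

/-- The skew-adjoint endomorphism `ι(ω) : v ↦ (ι_v ω)^♯` associated to a 2-form `ω`. -/
noncomputable def twoFormEnd {V : Type*} [AddCommGroup V] [Module ℝ V]
    [FiniteDimensional ℝ V] (g : LinearMap.BilinForm ℝ V) (hnd : g.Nondegenerate)
    (ω : V →ₗ[ℝ] V →ₗ[ℝ] ℝ) : V →ₗ[ℝ] V :=
  (g.toDual hnd).symm.toLinearMap ∘ₗ ω

lemma twoFormEnd_wedge2_apply {V : Type*} [AddCommGroup V] [Module ℝ V]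
    [FiniteDimensional ℝ V] (g : LinearMap.BilinForm ℝ V) (hnd : g.Nondegenerate)
    (a b v : V) :
    twoFormEnd g hnd (wedge2 g a b) v = g a v • b - g b v • a := by
  apply (g.toDual hnd).injective
  have h : ∀ w : V, g.toDual hnd w = g w := fun _ => rfl
  rw [h]
  simp only [twoFormEnd, wedge2, LinearMap.comp_apply, LinearEquiv.coe_coe,
    LinearEquiv.apply_symm_apply]
  ext w
  simp [h, mul_comm]

/-- For null vectors `e₋, e₊` with `⟨e₋,e₊⟩ = 1` and `x, y` orthogonal to both,
`[ι(e₋♭∧x♭), ι(e₊♭∧y♭)] = ι(⟨x,y⟩ · e₋♭∧e₊♭ + x♭∧y♭)`. -/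
theorem stmt_5 {V : Type*} [AddCommGroup V] [Module ℝ V] [FiniteDimensional ℝ V]
    (g : LinearMap.BilinForm ℝ V) (hsymm : g.IsSymm) (hnd : g.Nondegenerate)
    (em ep : V) (hem : g em em = 0) (hep : g ep ep = 0) (hpair : g em ep = 1)
    (x y : V) (hxm : g em x = 0) (hxp : g ep x = 0) (hym : g em y = 0) (hyp : g ep y = 0) :
    twoFormEnd g hnd (wedge2 g em x) ∘ₗ twoFormEnd g hnd (wedge2 g ep y)
      - twoFormEnd g hnd (wedge2 g ep y) ∘ₗ twoFormEnd g hnd (wedge2 g em x)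
      = twoFormEnd g hnd (g x y • wedge2 g em ep + wedge2 g x y) := by
  have hxm' : g x em = 0 := by rw [← hsymm.eq]; simpa using hxm
  have hxp' : g x ep = 0 := by rw [← hsymm.eq]; simpa using hxp
  have hym' : g y em = 0 := by rw [← hsymm.eq]; simpa using hym
  have hyp' : g y ep = 0 := by rw [← hsymm.eq]; simpa using hyp
  have hpair' : g ep em = 1 := by rw [← hsymm.eq]; simpa using hpair
  have hyx : g y x = g x y := by rw [← hsymm.eq]
  ext v
  have h2 : ∀ a b w : V, (g.toDual hnd).symm ((wedge2 g a b) w) = g a w • b - g b w • a :=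
    fun a b w => twoFormEnd_wedge2_apply g hnd a b w
  simp only [twoFormEnd, LinearEquiv.coe_coe, LinearMap.sub_apply, LinearMap.comp_apply,
    LinearMap.add_apply, LinearMap.smul_apply, map_add, map_smul, h2, map_sub, smul_eq_mul,
    hem, hep, hpair, hpair', hxm, hxm', hxp, hxp',
    hym, hym', hyp, hyp', hyx, mul_zero, zero_mul, mul_one, one_mul, zero_sub, sub_zero,
    smul_sub, smul_smul, neg_smul, zero_smul, sub_neg_eq_add]
  module
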